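/- arXiv:math/0405500 — 2 statements merged into one kernel-verified Lean document; each statement's English description precedes it below -/
import Mathlib

section
/- The group ℤ^k is (**)-relatively hyperbolic with respect to the trivial subgroup, with polynomials Q₁(r) = 0 and Q₂(r) = 2r (for the word length L from the standard generators): there exists a map T : ℤ^k × ℤ^k → ℤ^k (recording the point a, with g' = h' = 1) satisfying: (i) T(g,h) = T(h,g) and T(h⁻¹, h⁻¹g) = h⁻¹·T(g,h); (ii) trivially L(h') = 0; (iii) for each g ∈ ℤ^k, the number of values a = T(g,h) over all h with L(h) = r is at most Q₂(r) for some polynomial Q₂. -/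
/-- Word length on `ℤᵏ` with respect to the standard generators. -/
def zlen {k : ℕ} (g : Fin k → ℤ) : ℕ := ∑ i, (g i).natAbs

/-- `ℤᵏ` is (**)-relatively hyperbolic with respect to the trivial
subgroup (with `g' = h' = 1`, so `Q₁ = 0` trivially): there is a map `T` recording the
point `a` which is symmetric, equivariant under the triangle-vertex permutation, and
such that for fixed `g` the number of values `T g h` over `h` with `zlen h = r` is
bounded by a polynomial `Q₂` evaluated at `r`. -/
theorem stmt10 (k : ℕ) :
    ∃ (T : (Fin k → ℤ) → (Fin k → ℤ) → (Fin k → ℤ)) (Q₂ : Polynomial ℕ),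
      (∀ g h, T g h = T h g) ∧
      (∀ g h, T (-h) (g - h) = T g h - h) ∧
      (∀ (g : Fin k → ℤ) (r : ℕ),
        {a | ∃ h, zlen h = r ∧ T g h = a}.Finite ∧
        Nat.card {a | ∃ h, zlen h = r ∧ T g h = a} ≤ Q₂.eval r) := by
  refine ⟨fun g h i => max (min (g i) (h i)) (min 0 (max (g i) (h i))),
    (2 * Polynomial.X + 1) ^ k, ?_, ?_, ?_⟩
  · intro g h; funext i; simp only [min_comm (g i), max_comm (g i)]
  · intro g h; funext i
    simp only [Pi.neg_apply, Pi.sub_apply]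
    omega
  · intro g r
    have key : ∀ a ∈ {a | ∃ h, zlen h = r ∧
        (fun i => max (min (g i) (h i)) (min 0 (max (g i) (h i)))) = a},
        a ∈ Set.Icc (fun _ : Fin k => -(r : ℤ)) (fun _ => (r : ℤ)) := by
      rintro a ⟨h, hr, rfl⟩
      have hb : ∀ i, (h i).natAbs ≤ r := by
        intro i
        rw [← hr]
        exact Finset.single_le_sum (f := fun j => (h j).natAbs)
          (fun j _ => Nat.zero_le _) (Finset.mem_univ i)
      constructor <;> intro i <;> have := hb i <;> simp <;> omega
    have hIccFin : (Set.Icc (fun _ : Fin k => -(r : ℤ)) (fun _ => (r : ℤ))).Finite :=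
      Set.finite_Icc _ _
    have hfin : {a | ∃ h, zlen h = r ∧
        (fun i => max (min (g i) (h i)) (min 0 (max (g i) (h i)))) = a}.Finite :=
      hIccFin.subset key
    refine ⟨hfin, ?_⟩
    have hle := Set.ncard_le_ncard key hIccFin
    have hIcc : (Set.Icc (fun _ : Fin k => -(r : ℤ)) (fun _ => (r : ℤ))).ncard
        = (2 * r + 1) ^ k := by
      rw [← Finset.coe_Icc, Set.ncard_coe_finset, Pi.card_Icc]
      have hc : (Finset.Icc (-(r:ℤ)) r).card = 2 * r + 1 := by
        clear key hle hfin hIccFin; rw [Int.card_Icc]; omega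
      simp [hc]
    have heval : ((2 * Polynomial.X + 1 : Polynomial ℕ) ^ k).eval r = (2 * r + 1) ^ k := by
      simp
    rw [heval]
    calc Nat.card {a | ∃ h, zlen h = r ∧
          (fun i => max (min (g i) (h i)) (min 0 (max (g i) (h i)))) = a}
        = _ := rfl
      _ ≤ (2 * r + 1) ^ k := by rw [← hIcc]; exact hle
end

section
/- Let G be finitely generated with word length L and Cayley graph X, and suppose G is (*)-relatively hyperbolic with respect to finitely generated subgroups H₁,…,H_m with constants σ, δ; set κ = σ + δ. Fix for each g a geodesic 𝔮_g from 1 to g. Then every g ∈ G with L(g) = r (for r ∈ {p, r₂}) admits at most C₁·r₁ + C₂ central decompositions g = g₁ η g₂ arising from triangles with sides 𝔮_g, 𝔮_h (L(h) = r₁), h𝔮_k, where C₁, C₂ are constants depending only on G, S, σ, δ, m and the H_i. -/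
/-- Word length with respect to a finite generating set `S`. -/
noncomputable def wlen {G : Type*} [Group G] (S : Finset G) (g : G) : ℕ :=
  sInf {n : ℕ | ∃ l : List G, (∀ x ∈ l, x ∈ S) ∧ l.prod = g ∧ l.length = n}

/-- Word metric on the Cayley graph of `(G, S)`. -/
noncomputable def wdist {G : Type*} [Group G] (S : Finset G) (g h : G) : ℕ :=
  wlen S (g⁻¹ * h)

/-- `f` restricted to `{0, …, n}` is a (discrete) geodesic in the Cayley graph. -/
def IsGeod {G : Type*} [Group G] (S : Finset G) (f : ℕ → G) (n : ℕ) : Prop :=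
  ∀ i j : ℕ, i ≤ j → j ≤ n → wdist S (f i) (f j) = j - i

/-- A geodesic triangle: three geodesic sides, cyclically sharing endpoints. -/
def IsTriangle {G : Type*} [Group G] (S : Finset G) (f₁ : ℕ → G) (n₁ : ℕ)
    (f₂ : ℕ → G) (n₂ : ℕ) (f₃ : ℕ → G) (n₃ : ℕ) : Prop :=
  IsGeod S f₁ n₁ ∧ IsGeod S f₂ n₂ ∧ IsGeod S f₃ n₃ ∧
    f₁ n₁ = f₂ 0 ∧ f₂ n₂ = f₃ 0 ∧ f₃ n₃ = f₁ 0

/-- `f j` is in the closed `σ`-neighborhood of `A`. -/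
def NearSet {G : Type*} [Group G] (S : Finset G) (σ : ℝ) (A : Set G) (p : G) : Prop :=
  ∃ a ∈ A, (wdist S p a : ℝ) ≤ σ

/-- `j` is the entrance index of the side `f` (of length `n`) into the closed
`σ`-neighborhood of `A`. -/
def IsEntrance {G : Type*} [Group G] (S : Finset G) (f : ℕ → G) (n : ℕ) (A : Set G)
    (σ : ℝ) (j : ℕ) : Prop :=
  j ≤ n ∧ NearSet S σ A (f j) ∧ ∀ j' < j, ¬ NearSet S σ A (f j')

/-- `j` is the exit index of the side `f` (of length `n`) from the closed
`σ`-neighborhood of `A`. -/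
def IsExit {G : Type*} [Group G] (S : Finset G) (f : ℕ → G) (n : ℕ) (A : Set G)
    (σ : ℝ) (j : ℕ) : Prop :=
  j ≤ n ∧ NearSet S σ A (f j) ∧ ∀ j' : ℕ, j < j' → j' ≤ n → ¬ NearSet S σ A (f j')

/-- The condition of property (*) for a geodesic triangle with (cyclically oriented)
sides `f₁, f₂, f₃` and the set `A` (a coset `gHᵢ`): the closed `σ`-neighborhood of `A`
meets all three sides, and at each vertex of the triangle the two nearby
entrance/exit points are at distance `< δ` from each other. -/
def StarCond {G : Type*} [Group G] (S : Finset G) (σ δ : ℝ) (f₁ : ℕ → G) (n₁ : ℕ)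
    (f₂ : ℕ → G) (n₂ : ℕ) (f₃ : ℕ → G) (n₃ : ℕ) (A : Set G) : Prop :=
  ∃ a₁ b₂ b₁ c₂ c₁ a₂ : ℕ,
    IsEntrance S f₁ n₁ A σ a₁ ∧ IsExit S f₁ n₁ A σ b₂ ∧
    IsEntrance S f₂ n₂ A σ b₁ ∧ IsExit S f₂ n₂ A σ c₂ ∧
    IsEntrance S f₃ n₃ A σ c₁ ∧ IsExit S f₃ n₃ A σ a₂ ∧
    (wdist S (f₁ a₁) (f₃ a₂) : ℝ) < δ ∧
    (wdist S (f₂ b₁) (f₁ b₂) : ℝ) < δ ∧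
    (wdist S (f₃ c₁) (f₂ c₂) : ℝ) < δ

/-- `(g₁, η, g₂)` is a central decomposition of `g` arising from a geodesic triangle
with vertices `1, h, g = hk` (where `wlen S h = r₁`), sides `𝔮_h`, `h·𝔮_k` and the
reverse of `𝔮_g`, and a coset `γ·Hᵢ` furnished by property (*): `g = g₁ η g₂` with
`g₁ ∈ γHᵢ`, `η ∈ Hᵢ`, `g₁` within `κ = σ + δ` of the entrance point of `𝔮_g` into the
closed `σ`-neighborhood of `γHᵢ` and `g₁η` within `κ` of its exit point. -/
def CentralDec {G : Type*} [Group G] (S : Finset G) {m : ℕ} (H : Fin m → Subgroup G)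
    (σ δ : ℝ) (q : G → ℕ → G) (r₁ : ℕ) (g : G) (t : G × G × G) : Prop :=
  ∃ (i : Fin m) (γ h k : G),
    h * k = g ∧ wlen S h = r₁ ∧
    g = t.1 * t.2.1 * t.2.2 ∧
    γ⁻¹ * t.1 ∈ H i ∧ t.2.1 ∈ H i ∧
    StarCond S σ δ (q h) (wlen S h) (fun j => h * q k j) (wlen S k)
      (fun j => q g (wlen S g - j)) (wlen S g) {u : G | γ⁻¹ * u ∈ H i} ∧
    ∃ e x : ℕ,
      IsEntrance S (q g) (wlen S g) {u : G | γ⁻¹ * u ∈ H i} σ e ∧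
      IsExit S (q g) (wlen S g) {u : G | γ⁻¹ * u ∈ H i} σ x ∧
      (wdist S t.1 (q g e) : ℝ) ≤ σ + δ ∧
      (wdist S (t.1 * t.2.1) (q g x) : ℝ) ≤ σ + δ

/-!
A central decomposition `g = g₁ η g₂` is determined by its entrance index `e`, the offset of
`g₁` from `𝔮_g(e)`, the index `i` of the subgroup and the offset of `g₁η` from the exit point:
since `γHᵢ = g₁Hᵢ`, the exit point depends only on `g₁` and `i`. Both offsets lie in the ball
of radius `κ = σ + δ`, and property (*) at the vertex `1` puts `𝔮_g(e)` within `δ` of a point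
of `𝔮_h`, so `e < r₁ + δ`. Hence there are at most `(r₁ + ⌈δ⌉)·m·|B(κ)|²` decompositions.
-/

section WordMetric

variable {G : Type*} [Group G] {S : Finset G}

theorem exists_word_length_eq_wlen (hgen : ∀ g : G, ∃ l : List G, (∀ x ∈ l, x ∈ S) ∧ l.prod = g)
    (g : G) : ∃ l : List G, (∀ x ∈ l, x ∈ S) ∧ l.prod = g ∧ l.length = wlen S g := by
  obtain ⟨l, hl, hp⟩ := hgen g
  have hne : {n : ℕ | ∃ l : List G, (∀ x ∈ l, x ∈ S) ∧ l.prod = g ∧ l.length = n}.Nonempty :=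
    ⟨l.length, l, hl, hp, rfl⟩
  exact Nat.sInf_mem hne

theorem wlen_mul_le (hgen : ∀ g : G, ∃ l : List G, (∀ x ∈ l, x ∈ S) ∧ l.prod = g) (a b : G) :
    wlen S (a * b) ≤ wlen S a + wlen S b := by
  obtain ⟨la, hla, rfl, hna⟩ := exists_word_length_eq_wlen hgen a
  obtain ⟨lb, hlb, rfl, hnb⟩ := exists_word_length_eq_wlen hgen b
  rw [← hna, ← hnb, ← List.length_append]
  refine Nat.sInf_le ⟨la ++ lb, ?_, List.prod_append, rfl⟩
  simpa only [List.mem_append, or_imp, forall_and] using ⟨hla, hlb⟩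

theorem wdist_triangle (hgen : ∀ g : G, ∃ l : List G, (∀ x ∈ l, x ∈ S) ∧ l.prod = g)
    (a b c : G) : wdist S a c ≤ wdist S a b + wdist S b c := by
  simpa only [wdist, mul_assoc, mul_inv_cancel_left] using wlen_mul_le hgen (a⁻¹ * b) (b⁻¹ * c)

theorem finite_setOf_wlen_le (hgen : ∀ g : G, ∃ l : List G, (∀ x ∈ l, x ∈ S) ∧ l.prod = g)
    (n : ℕ) : {u : G | wlen S u ≤ n}.Finite := by
  refine ((List.finite_length_le ↥S n).image fun l => (l.map Subtype.val).prod).subset ?_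
  intro u hu
  obtain ⟨l, hl, rfl, hn⟩ := exists_word_length_eq_wlen hgen u
  lift l to List ↥S using hl
  refine ⟨l, ?_, rfl⟩
  rw [Set.mem_ofPred_eq, ← List.length_map Subtype.val, hn]
  exact hu

end WordMetric

section EntranceExit

variable {G : Type*} [Group G] {S : Finset G} {f : ℕ → G} {n : ℕ} {A : Set G} {σ : ℝ}

theorem IsEntrance.le_of_nearSet {e j : ℕ} (he : IsEntrance S f n A σ e)
    (hj : NearSet S σ A (f j)) : e ≤ j :=
  not_lt.1 fun hlt => he.2.2 j hlt hj

open Classical in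
/-- Takes the junk value `0` when no `f j` with `j ≤ n` is near `A`. -/
noncomputable def exitIndex (S : Finset G) (f : ℕ → G) (n : ℕ) (A : Set G) (σ : ℝ) : ℕ :=
  Nat.findGreatest (fun j => NearSet S σ A (f j)) n

theorem IsExit.exitIndex_eq {x : ℕ} (hx : IsExit S f n A σ x) : exitIndex S f n A σ = x := by
  classical
  exact Nat.findGreatest_eq_iff.2 ⟨hx.1, fun _ => hx.2.1, fun _ hlt hle => hx.2.2 _ hlt hle⟩

end EntranceExit

section CentralDecompositions

variable {G : Type*} [Group G] {S : Finset G}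

theorem setOf_inv_mul_mem_eq {H : Subgroup G} {a b : G} (h : a⁻¹ * b ∈ H) :
    {u : G | a⁻¹ * u ∈ H} = {u : G | b⁻¹ * u ∈ H} := by
  ext u
  constructor
  · intro hu
    simpa [mul_assoc] using mul_mem (inv_mem h) hu
  · intro hu
    simpa [mul_assoc] using mul_mem h hu

theorem IsEntrance.lt_of_starCond
    (hgen : ∀ g : G, ∃ l : List G, (∀ x ∈ l, x ∈ S) ∧ l.prod = g)
    {f₁ f₂ f : ℕ → G} {n₁ n₂ n : ℕ} {A : Set G} {σ δ : ℝ} {e : ℕ}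
    (hf₁ : IsGeod S f₁ n₁) (hf₁0 : f₁ 0 = 1) (hf : IsGeod S f n) (hf0 : f 0 = 1)
    (hstar : StarCond S σ δ f₁ n₁ f₂ n₂ (fun j => f (n - j)) n A)
    (he : IsEntrance S f n A σ e) : (e : ℝ) < n₁ + δ := by
  obtain ⟨a₁, -, -, -, -, a₂, ha₁, -, -, -, -, ha₂, hd, -, -⟩ := hstar
  have he_le : e ≤ n - a₂ := he.le_of_nearSet ha₂.2.1
  have hlen₁ : wdist S 1 (f₁ a₁) = a₁ := by simpa [hf₁0] using hf₁ 0 a₁ a₁.zero_le ha₁.1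
  have hlen : wdist S 1 (f (n - a₂)) = n - a₂ := by
    simpa [hf0] using hf 0 (n - a₂) (n - a₂).zero_le (n.sub_le a₂)
  have htri : n - a₂ ≤ a₁ + wdist S (f₁ a₁) (f (n - a₂)) := by
    simpa only [hlen, hlen₁] using wdist_triangle hgen 1 (f₁ a₁) (f (n - a₂))
  have ha₁_le : (a₁ : ℝ) ≤ n₁ := by exact_mod_cast ha₁.1
  have he_bound : (e : ℝ) ≤ a₁ + wdist S (f₁ a₁) (f (n - a₂)) := by
    exact_mod_cast he_le.trans htri
  linarith

/-- The decomposition `(g₁, η, g₂)` with code `(e, g₁⁻¹ 𝔮_g(e), i, (g₁η)⁻¹ 𝔮_g(x))`. -/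
noncomputable def centralDecOfCode (S : Finset G) {m : ℕ} (H : Fin m → Subgroup G) (σ : ℝ)
    (q : G → ℕ → G) (g : G) (c : ℕ × G × Fin m × G) : G × G × G :=
  let g₁ := q g c.1 * c.2.1⁻¹
  let y := q g (exitIndex S (q g) (wlen S g) {u | g₁⁻¹ * u ∈ H c.2.2.1} σ) * c.2.2.2⁻¹
  (g₁, g₁⁻¹ * y, y⁻¹ * g)

theorem CentralDec.mem_image_centralDecOfCode
    (hgen : ∀ g : G, ∃ l : List G, (∀ x ∈ l, x ∈ S) ∧ l.prod = g)
    {m : ℕ} {H : Fin m → Subgroup G} {σ δ : ℝ} {q : G → ℕ → G}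
    (hq : ∀ g : G, IsGeod S (q g) (wlen S g) ∧ q g 0 = 1) {r₁ : ℕ} {g : G} {t : G × G × G}
    (ht : CentralDec S H σ δ q r₁ g t) :
    t ∈ centralDecOfCode S H σ q g '' (Set.Iio (r₁ + ⌈δ⌉₊) ×ˢ {u | wlen S u ≤ ⌊σ + δ⌋₊} ×ˢ
      Set.univ ×ˢ {u | wlen S u ≤ ⌊σ + δ⌋₊}) := by
  obtain ⟨g₁, η, g₂⟩ := t
  obtain ⟨i, γ, h, k, -, rfl, hdec, hγ, -, hstar, e, x, he, hx, hde, hdx⟩ := ht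
  dsimp only at hdec hγ hstar he hx hde hdx
  rw [setOf_inv_mul_mem_eq hγ] at hstar he hx
  have he_lt : (e : ℝ) < wlen S h + ⌈δ⌉₊ :=
    (he.lt_of_starCond hgen (hq h).1 (hq h).2 (hq g).1 (hq g).2 hstar).trans_le
      (add_le_add_right (Nat.le_ceil δ) _)
  refine ⟨(e, g₁⁻¹ * q g e, i, (g₁ * η)⁻¹ * q g x),
    ⟨by exact_mod_cast he_lt, Nat.le_floor hde, trivial, Nat.le_floor hdx⟩, ?_⟩
  have hg₁ : q g e * (g₁⁻¹ * q g e)⁻¹ = g₁ := by group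
  have hy : q g x * ((g₁ * η)⁻¹ * q g x)⁻¹ = g₁ * η := by group
  simp only [centralDecOfCode, hg₁, hx.exitIndex_eq, hy, inv_mul_cancel_left, Prod.mk.injEq]
  refine ⟨trivial, trivial, ?_⟩
  rw [hdec, inv_mul_cancel_left]

theorem finite_setOf_centralDec_and_ncard_le
    (hgen : ∀ g : G, ∃ l : List G, (∀ x ∈ l, x ∈ S) ∧ l.prod = g)
    {m : ℕ} (H : Fin m → Subgroup G) (σ δ : ℝ) {q : G → ℕ → G}
    (hq : ∀ g : G, IsGeod S (q g) (wlen S g) ∧ q g 0 = 1) (r₁ : ℕ) (g : G) :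
    {t | CentralDec S H σ δ q r₁ g t}.Finite ∧
      {t | CentralDec S H σ δ q r₁ g t}.ncard ≤
        (r₁ + ⌈δ⌉₊) * ({u | wlen S u ≤ ⌊σ + δ⌋₊}.ncard *
          (m * {u | wlen S u ≤ ⌊σ + δ⌋₊}.ncard)) := by
  set B := {u | wlen S u ≤ ⌊σ + δ⌋₊}
  have hB : B.Finite := finite_setOf_wlen_le hgen _
  have hcodes : (Set.Iio (r₁ + ⌈δ⌉₊) ×ˢ B ×ˢ (Set.univ : Set (Fin m)) ×ˢ B).Finite :=
    (Set.finite_Iio _).prod (hB.prod (Set.finite_univ.prod hB))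
  have hsub : {t | CentralDec S H σ δ q r₁ g t} ⊆ centralDecOfCode S H σ q g ''
      (Set.Iio (r₁ + ⌈δ⌉₊) ×ˢ B ×ˢ Set.univ ×ˢ B) :=
    fun _ ht => ht.mem_image_centralDecOfCode hgen hq
  refine ⟨(hcodes.image _).subset hsub, ?_⟩
  calc {t | CentralDec S H σ δ q r₁ g t}.ncard
      ≤ (Set.Iio (r₁ + ⌈δ⌉₊) ×ˢ B ×ˢ (Set.univ : Set (Fin m)) ×ˢ B).ncard :=
        (Set.ncard_le_ncard hsub (hcodes.image _)).trans (Set.ncard_image_le hcodes)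
    _ = (r₁ + ⌈δ⌉₊) * (B.ncard * (m * B.ncard)) := by
        simp only [Set.ncard_prod, Set.ncard_Iio_nat, Set.ncard_univ, Nat.card_fin]

end CentralDecompositions

theorem stmt12_general {G : Type*} [Group G] (S : Finset G)
    (hgen : ∀ g : G, ∃ l : List G, (∀ x ∈ l, x ∈ S) ∧ l.prod = g)
    {m : ℕ} (H : Fin m → Subgroup G)
    (σ δ : ℝ)
    (q : G → ℕ → G)
    (hq : ∀ g : G, IsGeod S (q g) (wlen S g) ∧ q g 0 = 1 ∧ q g (wlen S g) = g) :
    ∃ C₁ C₂ : ℝ, 0 ≤ C₁ ∧ 0 ≤ C₂ ∧ ∀ (r₁ : ℕ) (g : G),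
      {t : G × G × G | CentralDec S H σ δ q r₁ g t}.Finite ∧
      (Nat.card {t : G × G × G | CentralDec S H σ δ q r₁ g t} : ℝ) ≤ C₁ * r₁ + C₂ := by
  set B := {u | wlen S u ≤ ⌊σ + δ⌋₊}.ncard
  refine ⟨B * (m * B), ⌈δ⌉₊ * (B * (m * B)), by positivity, by positivity, fun r₁ g => ?_⟩
  obtain ⟨hfin, hcard⟩ :=
    finite_setOf_centralDec_and_ncard_le hgen H σ δ (fun g => ⟨(hq g).1, (hq g).2.1⟩) r₁ g
  refine ⟨hfin, ?_⟩
  rw [Nat.card_coe_set_eq]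
  calc ({t | CentralDec S H σ δ q r₁ g t}.ncard : ℝ)
      ≤ ((r₁ + ⌈δ⌉₊) * (B * (m * B)) : ℕ) := by exact_mod_cast hcard
    _ = B * (m * B) * r₁ + ⌈δ⌉₊ * (B * (m * B)) := by push_cast; ring

/-- in a group `G` which is (*)-relatively hyperbolic with respect to
finitely generated subgroups `H₁, …, H_m` with constants `σ, δ`, with a fixed choice
`𝔮_g` of geodesic from `1` to each `g`, every `g` admits at most `C₁·r₁ + C₂` central
decompositions arising from triangles whose second vertex `h` has length `r₁`. -/
theorem stmt12 {G : Type*} [Group G] (S : Finset G)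
    (hsym : ∀ s ∈ S, s⁻¹ ∈ S)
    (hgen : ∀ g : G, ∃ l : List G, (∀ x ∈ l, x ∈ S) ∧ l.prod = g)
    {m : ℕ} (H : Fin m → Subgroup G) (hFG : ∀ i, (H i).FG)
    (σ δ : ℝ) (hσ : 0 ≤ σ) (hδ : 0 ≤ δ)
    (hstar : ∀ (f₁ : ℕ → G) (n₁ : ℕ) (f₂ : ℕ → G) (n₂ : ℕ) (f₃ : ℕ → G) (n₃ : ℕ),
      IsTriangle S f₁ n₁ f₂ n₂ f₃ n₃ →
        ∃ (i : Fin m) (γ : G), StarCond S σ δ f₁ n₁ f₂ n₂ f₃ n₃ {u : G | γ⁻¹ * u ∈ H i})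
    (q : G → ℕ → G)
    (hq : ∀ g : G, IsGeod S (q g) (wlen S g) ∧ q g 0 = 1 ∧ q g (wlen S g) = g) :
    ∃ C₁ C₂ : ℝ, 0 ≤ C₁ ∧ 0 ≤ C₂ ∧ ∀ (r₁ : ℕ) (g : G),
      {t : G × G × G | CentralDec S H σ δ q r₁ g t}.Finite ∧
      (Nat.card {t : G × G × G | CentralDec S H σ δ q r₁ g t} : ℝ) ≤ C₁ * r₁ + C₂ :=
  stmt12_general S hgen H σ δ q hq
end
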